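/- For i = 1,2,3 let A_i and B_i be qubit observables with Bloch vectors a_i, b_i ∈ ℝ³, and assume each of the triples {a₁,a₂,a₃} and {b₁,b₂,b₃} is linearly independent. Define the 4×4 Hermitian matrices M_i = A_i ⊗ I + I ⊗ B_i (Kronecker products, I the 2×2 identity). If ρ is a separable bipartite density matrix, i.e. ρ = Σ_k p_k · ρ_{k,A} ⊗ ρ_{k,B} is a finite convex combination (p_k ≥ 0, Σ_k p_k = 1) of Kronecker products of qubit density matrices, then Σ_{i=1}^{3} (Δ_ρM_i)² ≥ (Tr(T_{a₁,a₂,a₃}) − λ_max(T_{a₁,a₂,a₃})) + (Tr(T_{b₁,b₂,b₃}) − λ_max(T_{b₁,b₂,b₃})). -/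

import Mathlib

open Matrix MeasureTheory Filter Set
open scoped RealInnerProductSpace Kronecker ComplexOrder

noncomputable section

/-- ℝ³ with the Euclidean norm and inner product. -/
abbrev E3 : Type := EuclideanSpace ℝ (Fin 3)

/-- The Pauli matrices. -/
def pauli1 : Matrix (Fin 2) (Fin 2) ℂ := !![0, 1; 1, 0]
def pauli2 : Matrix (Fin 2) (Fin 2) ℂ := !![0, -Complex.I; Complex.I, 0]
def pauli3 : Matrix (Fin 2) (Fin 2) ℂ := !![1, 0; 0, -1]

/-- The qubit observable `a₀·I + a·σ`. -/
def qObs (a0 : ℝ) (a : E3) : Matrix (Fin 2) (Fin 2) ℂ :=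
  (a0 : ℂ) • (1 : Matrix (Fin 2) (Fin 2) ℂ)
    + (a 0 : ℂ) • pauli1 + (a 1 : ℂ) • pauli2 + (a 2 : ℂ) • pauli3

/-- A density matrix: positive semidefinite with trace one. -/
def IsDensityMatrix {n : Type*} [Fintype n] (ρ : Matrix n n ℂ) : Prop :=
  ρ.PosSemidef ∧ ρ.trace = 1

/-- Mean value `⟨M⟩_ρ = Tr(Mρ)` of an observable `M` in the state `ρ`. -/
def mean {n : Type*} [Fintype n] (M ρ : Matrix n n ℂ) : ℝ :=
  (Matrix.trace (M * ρ)).re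

/-- Variance `(Δ_ρ M)² = Tr(M²ρ) − (Tr(Mρ))²`. -/
def variance {n : Type*} [Fintype n] (M ρ : Matrix n n ℂ) : ℝ :=
  (Matrix.trace (M * M * ρ)).re - (mean M ρ) ^ 2

/-- Uncertainty `Δ_ρ M` (standard deviation). -/
def uncertainty {n : Type*} [Fintype n] (M ρ : Matrix n n ℂ) : ℝ :=
  Real.sqrt (variance M ρ)

/-- Gram matrix of a tuple of vectors in ℝ³. -/
def gram {m : ℕ} (v : Fin m → E3) : Matrix (Fin m) (Fin m) ℝ :=
  Matrix.of fun i j => (inner ℝ (v i) (v j) : ℝ)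

lemma gram_isHermitian {m : ℕ} (v : Fin m → E3) : (gram v).IsHermitian := by
  ext i j
  simp [_root_.gram, Matrix.conjTranspose_apply, mul_comm, real_inner_comm]

/-- Smallest eigenvalue of the Gram matrix. -/
def lamMin {m : ℕ} (v : Fin m → E3) : ℝ := ⨅ i, (gram_isHermitian v).eigenvalues i

/-- Largest eigenvalue of the Gram matrix. -/
def lamMax {m : ℕ} (v : Fin m → E3) : ℝ := ⨆ i, (gram_isHermitian v).eigenvalues i

/-- The bipartite observable A ⊗ I + I ⊗ B. -/
def obs2 (A B : Matrix (Fin 2) (Fin 2) ℂ) :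
    Matrix (Fin 2 × Fin 2) (Fin 2 × Fin 2) ℂ :=
  A ⊗ₖ (1 : Matrix (Fin 2) (Fin 2) ℂ) + (1 : Matrix (Fin 2) (Fin 2) ℂ) ⊗ₖ B

/-! For a qubit state with Bloch vector `r`, `‖r‖ ≤ 1`, the variance of `a₀ I + a·σ` is
`‖a‖² - ⟪a, r⟫²`, and `∑ ⟪aᵢ, r⟫² ≤ λ_max(T_a)`. Variances of `A ⊗ I + I ⊗ B` add on product
states, so on a product state the three variances sum to at least
`(Tr T_a - λ_max T_a) + (Tr T_b - λ_max T_b)`. The variance is concave in the state, so the bound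
passes to convex combinations of product states. -/

def blochVector (ρ : Matrix (Fin 2) (Fin 2) ℂ) : E3 :=
  !₂[(trace (pauli1 * ρ)).re, (trace (pauli2 * ρ)).re, (trace (pauli3 * ρ)).re]

lemma qObs_eq_fin_two (a0 : ℝ) (a : E3) :
    qObs a0 a = !![(a0 : ℂ) + a 2, (a 0 : ℂ) - (a 1 : ℂ) * Complex.I;
      (a 0 : ℂ) + (a 1 : ℂ) * Complex.I, (a0 : ℂ) - a 2] := by
  ext i j
  fin_cases i <;> fin_cases j <;> simp [qObs, pauli1, pauli2, pauli3] <;> ring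

lemma qObs_isHermitian (a0 : ℝ) (a : E3) : (qObs a0 a).IsHermitian := by
  rw [qObs_eq_fin_two]
  ext i j
  fin_cases i <;> fin_cases j <;> simp [Matrix.conjTranspose_apply, Complex.ext_iff]

lemma qObs_mul_self (a0 : ℝ) (a : E3) :
    qObs a0 a * qObs a0 a = qObs (a0 ^ 2 + ‖a‖ ^ 2) ((2 * a0) • a) := by
  rw [EuclideanSpace.norm_sq_eq, qObs_eq_fin_two, qObs_eq_fin_two]
  ext i j
  fin_cases i <;> fin_cases j <;>
    · simp [Matrix.mul_apply, Fin.sum_univ_two, Fin.sum_univ_three, Complex.ext_iff,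
        -Complex.ofReal_pow]
      constructor <;> ring

lemma mean_qObs (a0 : ℝ) (a : E3) (ρ : Matrix (Fin 2) (Fin 2) ℂ) :
    mean (qObs a0 a) ρ = a0 * (trace ρ).re + ⟪a, blochVector ρ⟫ := by
  simp only [mean, qObs, Matrix.add_mul, smul_mul, one_mul, trace_add, trace_smul,
    smul_eq_mul, Complex.add_re, Complex.re_ofReal_mul, blochVector, PiLp.inner_apply,
    RCLike.inner_apply, Real.ringHom_apply, Fin.sum_univ_three, cons_val_zero, cons_val_one, cons_val]
  ring

lemma variance_qObs (a0 : ℝ) (a : E3) {ρ : Matrix (Fin 2) (Fin 2) ℂ} (hρ : trace ρ = 1) :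
    variance (qObs a0 a) ρ = ‖a‖ ^ 2 - ⟪a, blochVector ρ⟫ ^ 2 := by
  rw [variance, qObs_mul_self, ← mean, mean_qObs, mean_qObs, real_inner_smul_left, hρ]
  simp only [Complex.one_re]
  ring

lemma norm_blochVector_sq {ρ : Matrix (Fin 2) (Fin 2) ℂ} (hH : ρ.IsHermitian)
    (hρ : trace ρ = 1) : ‖blochVector ρ‖ ^ 2 = 1 - 4 * (det ρ).re := by
  have h00 : (ρ 0 0).im = 0 := Complex.conj_eq_iff_im.mp (hH.apply 0 0)
  have h10 : ρ 1 0 = star (ρ 0 1) := (hH.apply 1 0).symm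
  have h11 : ρ 1 1 = 1 - ρ 0 0 := by
    rw [trace_fin_two] at hρ
    linear_combination hρ
  rw [EuclideanSpace.norm_sq_eq, det_fin_two]
  simp [blochVector, Fin.sum_univ_three, trace_fin_two, pauli1, pauli2, pauli3, vecMul, dotProduct,
    Fin.sum_univ_two, h10, h11, h00]
  ring

lemma norm_blochVector_le_one {ρ : Matrix (Fin 2) (Fin 2) ℂ} (hρ : IsDensityMatrix ρ) :
    ‖blochVector ρ‖ ≤ 1 := by
  have hdet : 0 ≤ (det ρ).re := (Complex.nonneg_iff.mp hρ.1.det_nonneg).1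
  have hsq := norm_blochVector_sq hρ.1.isHermitian hρ.2
  nlinarith [norm_nonneg (blochVector ρ)]

section Gram

open scoped MatrixOrder

variable {m : ℕ} (v : Fin m → E3)

lemma lamMax_nonneg : 0 ≤ lamMax v :=
  Real.iSup_nonneg fun i => (posSemidef_gram ℝ v).eigenvalues_nonneg i

lemma gram_le_lamMax : gram v ≤ algebraMap ℝ (Matrix (Fin m) (Fin m) ℝ) (lamMax v) := by
  refine le_algebraMap_of_spectrum_le (fun x hx => ?_) (gram_isHermitian v).isSelfAdjoint
  obtain ⟨i, rfl⟩ := (gram_isHermitian v).spectrum_real_eq_range_eigenvalues ▸ hx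
  exact le_ciSup (Set.finite_range _).bddAbove i

lemma norm_sum_smul_sq_le_lamMax (c : Fin m → ℝ) :
    ‖∑ i, c i • v i‖ ^ 2 ≤ lamMax v * ∑ i, c i ^ 2 := by
  have h := (Matrix.le_iff.mp (gram_le_lamMax v)).dotProduct_mulVec_nonneg c
  rw [← real_inner_self_eq_norm_sq, ← star_trivial c, ← star_dotProduct_gram_mulVec]
  simp only [star_trivial, Algebra.algebraMap_eq_smul_one, sub_mulVec, smul_mulVec,
    one_mulVec, dotProduct_sub, dotProduct_smul, smul_eq_mul] at h ⊢
  simp only [dotProduct, ← sq] at h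
  exact sub_nonneg.mp h

/-- With `c i = ⟪v i, r⟫` and `u = ∑ c i • v i`, Cauchy–Schwarz gives
`(∑ c i ^ 2)² = ⟪u, r⟫² ≤ ‖u‖² ≤ lamMax v * ∑ c i ^ 2`. -/
lemma sum_inner_sq_le_lamMax {r : E3} (hr : ‖r‖ ≤ 1) : ∑ i, ⟪v i, r⟫ ^ 2 ≤ lamMax v := by
  set S := ∑ i, ⟪v i, r⟫ ^ 2
  set u := ∑ i, ⟪v i, r⟫ • v i
  have hur : ⟪u, r⟫ = S := by simp only [u, S, sum_inner, real_inner_smul_left, sq]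
  have hS : 0 ≤ S := Finset.sum_nonneg fun i _ => sq_nonneg _
  have hu : S ^ 2 ≤ lamMax v * S := calc
    S ^ 2 ≤ (‖u‖ * ‖r‖) ^ 2 := pow_le_pow_left₀ hS (hur ▸ real_inner_le_norm u r) 2
    _ ≤ ‖u‖ ^ 2 := by
      rw [mul_pow]; exact mul_le_of_le_one_right (sq_nonneg _) (pow_le_one₀ (norm_nonneg r) hr)
    _ ≤ lamMax v * S := norm_sum_smul_sq_le_lamMax v _
  rcases hS.eq_or_lt with hS | hS
  · rw [← hS]; exact lamMax_nonneg v
  · nlinarith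

end Gram

section Variance

variable {n m ι : Type*} [Fintype n] [Fintype m] [Fintype ι]

lemma im_trace_mul_eq_zero {M ρ : Matrix n n ℂ} (hM : M.IsHermitian) (hρ : ρ.IsHermitian) :
    (trace (M * ρ)).im = 0 := by
  refine Complex.conj_eq_iff_im.mp ?_
  rw [starRingEnd_apply, ← trace_conjTranspose, conjTranspose_mul, hρ.eq, hM.eq, trace_mul_comm]

/-- The cross term `2 Tr(Aρ₁) Tr(Bρ₂)` of the second moment cancels against the square of the mean
because `Tr(Aρ₁)` is real. -/
lemma variance_kronecker_add [DecidableEq n] [DecidableEq m] {A ρ₁ : Matrix n n ℂ}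
    {B ρ₂ : Matrix m m ℂ} (hA : A.IsHermitian) (hρ₁ : ρ₁.IsHermitian) (htr₁ : trace ρ₁ = 1)
    (htr₂ : trace ρ₂ = 1) :
    variance (A ⊗ₖ (1 : Matrix m m ℂ) + (1 : Matrix n n ℂ) ⊗ₖ B) (ρ₁ ⊗ₖ ρ₂)
      = variance A ρ₁ + variance B ρ₂ := by
  have hsq : (A ⊗ₖ (1 : Matrix m m ℂ) + (1 : Matrix n n ℂ) ⊗ₖ B)
      * (A ⊗ₖ (1 : Matrix m m ℂ) + (1 : Matrix n n ℂ) ⊗ₖ B)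
      = (A * A) ⊗ₖ 1 + 1 ⊗ₖ (B * B) + (2 : ℂ) • A ⊗ₖ B := by
    simp only [add_mul, mul_add, ← mul_kronecker_mul, one_mul, mul_one, two_smul]
    abel
  have him := im_trace_mul_eq_zero hA hρ₁
  simp only [variance, mean, hsq, add_mul, smul_mul, trace_add, trace_smul, ← mul_kronecker_mul,
    trace_kronecker, one_mul, htr₁, htr₂, mul_one, smul_eq_mul, Complex.add_re, Complex.mul_re,
    him, Complex.re_ofNat, Complex.im_ofNat]
  ring

lemma sum_mul_variance_le_variance_sum (M : Matrix n n ℂ) {p : ι → ℝ} (σ : ι → Matrix n n ℂ)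
    (hp : ∀ k, 0 ≤ p k) (hpsum : ∑ k, p k = 1) :
    ∑ k, p k * variance M (σ k) ≤ variance M (∑ k, (p k : ℂ) • σ k) := by
  have hlin (X : Matrix n n ℂ) :
      (trace (X * ∑ k, (p k : ℂ) • σ k)).re = ∑ k, p k * (trace (X * σ k)).re := by
    simp only [Matrix.mul_sum, Matrix.mul_smul, trace_sum, trace_smul, smul_eq_mul, Complex.re_sum,
      Complex.re_ofReal_mul]
  have hjensen : mean M (∑ k, (p k : ℂ) • σ k) ^ 2 ≤ ∑ k, p k * mean M (σ k) ^ 2 := by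
    rw [mean, hlin]
    simpa [mean] using
      (even_two.convexOn_pow : ConvexOn ℝ univ fun x : ℝ => x ^ 2).map_sum_le
        (t := Finset.univ) (fun k _ => hp k) hpsum (fun k _ => Set.mem_univ (mean M (σ k)))
  simp only [variance, mul_sub, Finset.sum_sub_distrib, hlin]
  linarith

end Variance

lemma trace_gram_sub_lamMax_le_sum_variance_qObs {m : ℕ} (a0 : Fin m → ℝ) (a : Fin m → E3)
    {ρ : Matrix (Fin 2) (Fin 2) ℂ} (hρ : IsDensityMatrix ρ) :
    (gram a).trace - lamMax a ≤ ∑ i, variance (qObs (a0 i) (a i)) ρ := by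
  have htr : (gram a).trace = ∑ i, ‖a i‖ ^ 2 := by
    simp only [trace, diag, _root_.gram, of_apply, real_inner_self_eq_norm_sq]
  simp only [variance_qObs _ _ hρ.2, Finset.sum_sub_distrib, htr]
  linarith [sum_inner_sq_le_lamMax a (norm_blochVector_le_one hρ)]

lemma le_sum_variance_obs2_kronecker {m : ℕ} (a0 b0 : Fin m → ℝ) (a b : Fin m → E3)
    {ρ₁ ρ₂ : Matrix (Fin 2) (Fin 2) ℂ} (hρ₁ : IsDensityMatrix ρ₁) (hρ₂ : IsDensityMatrix ρ₂) :
    ((gram a).trace - lamMax a) + ((gram b).trace - lamMax b)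
      ≤ ∑ i, variance (obs2 (qObs (a0 i) (a i)) (qObs (b0 i) (b i))) (ρ₁ ⊗ₖ ρ₂) := by
  simp only [obs2, variance_kronecker_add (qObs_isHermitian _ _) hρ₁.1.isHermitian hρ₁.2 hρ₂.2,
    Finset.sum_add_distrib]
  exact add_le_add (trace_gram_sub_lamMax_le_sum_variance_qObs a0 a hρ₁)
    (trace_gram_sub_lamMax_le_sum_variance_qObs b0 b hρ₂)

theorem separable_bipartite_three_measurements_general
    (a0 b0 : Fin 3 → ℝ) (a b : Fin 3 → E3)
    (ρ : Matrix (Fin 2 × Fin 2) (Fin 2 × Fin 2) ℂ)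
    (N : ℕ) (p : Fin N → ℝ)
    (ρA ρB : Fin N → Matrix (Fin 2) (Fin 2) ℂ)
    (hp : ∀ k, 0 ≤ p k) (hpsum : ∑ k, p k = 1)
    (hA : ∀ k, IsDensityMatrix (ρA k)) (hB : ∀ k, IsDensityMatrix (ρB k))
    (hsep : ρ = ∑ k, (p k : ℂ) • (ρA k ⊗ₖ ρB k)) :
    ∑ i : Fin 3, variance (obs2 (qObs (a0 i) (a i)) (qObs (b0 i) (b i))) ρ
      ≥ ((gram a).trace - lamMax a) + ((gram b).trace - lamMax b) := by
  set c := ((gram a).trace - lamMax a) + ((gram b).trace - lamMax b)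
  rw [ge_iff_le, hsep]
  calc c = ∑ k, p k * c := by rw [← Finset.sum_mul, hpsum, one_mul]
    _ ≤ ∑ k, p k * ∑ i, variance (obs2 (qObs (a0 i) (a i)) (qObs (b0 i) (b i))) (ρA k ⊗ₖ ρB k) :=
      Finset.sum_le_sum fun k _ =>
        mul_le_mul_of_nonneg_left (le_sum_variance_obs2_kronecker a0 b0 a b (hA k) (hB k)) (hp k)
    _ = ∑ i, ∑ k, p k * variance (obs2 (qObs (a0 i) (a i)) (qObs (b0 i) (b i))) (ρA k ⊗ₖ ρB k) := by
      simp only [Finset.mul_sum]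
      exact Finset.sum_comm
    _ ≤ _ := Finset.sum_le_sum fun i _ => sum_mul_variance_le_variance_sum _ _ hp hpsum

/-- entanglement criterion for separable bipartite states with three
composite measurements. -/
theorem separable_bipartite_three_measurements
    (a0 b0 : Fin 3 → ℝ) (a b : Fin 3 → E3)
    (hlia : LinearIndependent ℝ ![a 0, a 1, a 2])
    (hlib : LinearIndependent ℝ ![b 0, b 1, b 2])
    (ρ : Matrix (Fin 2 × Fin 2) (Fin 2 × Fin 2) ℂ)
    (N : ℕ) (p : Fin N → ℝ)
    (ρA ρB : Fin N → Matrix (Fin 2) (Fin 2) ℂ)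
    (hp : ∀ k, 0 ≤ p k) (hpsum : ∑ k, p k = 1)
    (hA : ∀ k, IsDensityMatrix (ρA k)) (hB : ∀ k, IsDensityMatrix (ρB k))
    (hsep : ρ = ∑ k, (p k : ℂ) • (ρA k ⊗ₖ ρB k)) :
    ∑ i : Fin 3, variance (obs2 (qObs (a0 i) (a i)) (qObs (b0 i) (b i))) ρ
      ≥ ((gram a).trace - lamMax a) + ((gram b).trace - lamMax b) :=
  separable_bipartite_three_measurements_general a0 b0 a b ρ N p ρA ρB hp hpsum hA hB hsep

end
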